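/- Let J be an unbounded subinterval of ℝ and g : J → ℝ a locally absolutely continuous function on J with derivative g′. Assume g′ ∈ L^α(J) for some α > 1, that g′ is of locally bounded variation on J, and that there exist a constant V_J > 0 and r ∈ (0,1] such that the total variation of g′ on the interval with endpoints a and b is at most V_J·|b − a|^r for all a, b ∈ J. Then g′ ∈ L^∞(J) and ‖g′‖_{J,∞} ≤ ((αr+1)/(α^{αr/(αr+1)}·r^{αr/(αr+1)}))·‖g′‖_{J,α}^{αr/(αr+1)}·V_J^{1/(αr+1)}. -/

import Mathlib

/-!
The variation bound makes `g'` Hölder: `|g' x - g' t| ≤ V |t - x| ^ r`. Since `J` is unbounded, every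
`x ∈ J` lies in an interval `I ⊆ J` of any length `δ`, on which `|g'| ≥ |g' x| - V δ ^ r`; Chebyshev's
inequality in `L^α(J)` then gives `|g' x| ≤ ‖g'‖_α δ ^ (-1/α) + V δ ^ r` for all `δ > 0`, and
minimising over `δ` yields the constant.
-/

open MeasureTheory Set Filter Topology
open scoped ENNReal

theorem dist_le_of_eVariationOn_le {α E : Type*} [LinearOrder α] [PseudoMetricSpace E]
    {f : α → E} {s : Set α} {a b : α} (ha : a ∈ s) (hb : b ∈ s) {c : ℝ} (hc : 0 ≤ c)
    (h : eVariationOn f s ≤ ENNReal.ofReal c) : dist (f a) (f b) ≤ c := by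
  rw [← ENNReal.ofReal_le_ofReal_iff hc, ← edist_dist]
  exact (eVariationOn.edist_le f ha hb).trans h

theorem Set.OrdConnected.exists_Icc_subset_of_not_isBounded {J : Set ℝ} (hJ : J.OrdConnected)
    (hJu : ¬ Bornology.IsBounded J) {x : ℝ} (hx : x ∈ J) {δ : ℝ} (hδ : 0 ≤ δ) :
    ∃ a, x ∈ Icc a (a + δ) ∧ Icc a (a + δ) ⊆ J := by
  rw [isBounded_iff_bddBelow_bddAbove, not_and_or] at hJu
  rcases hJu with hbelow | habove
  · obtain ⟨y, hy, hyx⟩ := not_bddBelow_iff.mp hbelow (x - δ)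
    exact ⟨x - δ, ⟨by linarith, by linarith⟩,
      fun t ht => hJ.out hy hx ⟨by linarith [ht.1], by linarith [ht.2]⟩⟩
  · obtain ⟨y, hy, hxy⟩ := not_bddAbove_iff.mp habove (x + δ)
    exact ⟨x, ⟨le_rfl, by linarith⟩, fun t ht => hJ.out hx hy ⟨ht.1, by linarith [ht.2]⟩⟩

theorem mul_measure_rpow_le_eLpNorm_of_le_enorm {α E : Type*} {m : MeasurableSpace α}
    {μ : Measure α} [NormedAddCommGroup E] {f : α → E} {p : ℝ≥0∞}
    (hf : AEStronglyMeasurable f μ) (hp0 : p ≠ 0) (hp : p ≠ ∞) {s : Set α} {ε : ℝ≥0∞}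
    (hε : ∀ x ∈ s, ε ≤ ‖f x‖ₑ) : ε * μ s ^ p.toReal⁻¹ ≤ eLpNorm f p μ := by
  have hp_pos : 0 < p.toReal := ENNReal.toReal_pos hp0 hp
  have hcheb : ε ^ p.toReal * μ s ≤ eLpNorm f p μ ^ p.toReal :=
    calc ε ^ p.toReal * μ s ≤ ε ^ p.toReal * μ {x | ε ≤ ‖f x‖ₑ} := by gcongr; exact hε
      _ ≤ eLpNorm f p μ ^ p.toReal := mul_meas_ge_le_pow_eLpNorm' μ hp0 hp hf ε
  calc ε * μ s ^ p.toReal⁻¹ = (ε ^ p.toReal * μ s) ^ p.toReal⁻¹ := by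
        rw [ENNReal.mul_rpow_of_nonneg _ _ (by positivity), ENNReal.rpow_rpow_inv hp_pos.ne']
    _ ≤ (eLpNorm f p μ ^ p.toReal) ^ p.toReal⁻¹ := by gcongr
    _ = eLpNorm f p μ := ENNReal.rpow_rpow_inv hp_pos.ne' _

theorem norm_le_eLpNorm_mul_rpow_add_of_holder_on_Icc {E : Type*} [NormedAddCommGroup E]
    {f : ℝ → E} {s : Set ℝ} {α V r a δ x : ℝ} (hα : 0 < α) (hV : 0 ≤ V) (hr : 0 ≤ r)
    (hδ : 0 < δ) (hf : MemLp f (ENNReal.ofReal α) (volume.restrict s))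
    (hs : Icc a (a + δ) ⊆ s) (hx : x ∈ Icc a (a + δ))
    (hhol : ∀ t ∈ Icc a (a + δ), ‖f x - f t‖ ≤ V * |t - x| ^ r) :
    ‖f x‖ ≤ (eLpNorm f (ENNReal.ofReal α) (volume.restrict s)).toReal * δ ^ (-(1 / α)) +
      V * δ ^ r := by
  set N := (eLpNorm f (ENNReal.ofReal α) (volume.restrict s)).toReal
  set c := ‖f x‖ - V * δ ^ r
  rcases le_or_gt c 0 with hc | hc
  · have : 0 ≤ N * δ ^ (-(1 / α)) := by positivity
    linarith
  have hlow : ∀ t ∈ Icc a (a + δ), ENNReal.ofReal c ≤ ‖f t‖ₑ := fun t ht => by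
    rw [← ofReal_norm]
    refine ENNReal.ofReal_le_ofReal ?_
    have hdist : |t - x| ≤ δ := abs_le.mpr ⟨by linarith [ht.1, hx.2], by linarith [ht.2, hx.1]⟩
    have hVδ := mul_le_mul_of_nonneg_left (Real.rpow_le_rpow (abs_nonneg _) hdist hr) hV
    linarith [hhol t ht, norm_sub_norm_le (f x) (f t)]
  have hmeas : volume.restrict s (Icc a (a + δ)) = ENNReal.ofReal δ := by
    rw [Measure.restrict_apply measurableSet_Icc, inter_eq_left.mpr hs, Real.volume_Icc,
      add_sub_cancel_left]
  have hcheb := mul_measure_rpow_le_eLpNorm_of_le_enorm hf.aestronglyMeasurable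
    (by simpa using hα) ENNReal.ofReal_ne_top hlow
  rw [hmeas, ENNReal.toReal_ofReal hα.le, ENNReal.ofReal_rpow_of_pos hδ,
    ← ENNReal.ofReal_mul hc.le] at hcheb
  have hcN : c * δ ^ α⁻¹ ≤ N :=
    (ENNReal.ofReal_le_iff_le_toReal hf.eLpNorm_ne_top).mp hcheb
  have hc_le : c ≤ N * δ ^ (-(1 / α)) := by
    rw [one_div, Real.rpow_neg hδ.le, ← div_eq_mul_inv, le_div_iff₀ (by positivity)]
    exact hcN
  linarith

/-- The minimiser of `N δ ^ (-1/α) + V δ ^ r` over `δ > 0` is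
`δ = (N / (α r V)) ^ (α / (α r + 1))`. -/
theorem le_of_forall_pos_le_mul_rpow_neg_add_mul_rpow {α r V N M : ℝ} (hα : 0 < α) (hr : 0 < r)
    (hV : 0 < V) (hN : 0 ≤ N) (h : ∀ δ, 0 < δ → M ≤ N * δ ^ (-(1 / α)) + V * δ ^ r) :
    M ≤ (α * r + 1) / (α ^ (α * r / (α * r + 1)) * r ^ (α * r / (α * r + 1))) *
      N ^ (α * r / (α * r + 1)) * V ^ (1 / (α * r + 1)) := by
  rcases hN.eq_or_lt with rfl | hN
  · rw [Real.zero_rpow (by positivity : α * r / (α * r + 1) ≠ 0), mul_zero, zero_mul]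
    have hlim : Tendsto (fun δ : ℝ => V * δ ^ r) (𝓝[>] 0) (𝓝 0) := by
      have hcont : Tendsto (fun δ : ℝ => V * δ ^ r) (𝓝 0) (𝓝 (V * 0 ^ r)) :=
        (Real.continuousAt_rpow_const 0 r (Or.inr hr.le)).tendsto.const_mul V
      rw [Real.zero_rpow hr.ne', mul_zero] at hcont
      exact hcont.mono_left nhdsWithin_le_nhds
    exact ge_of_tendsto hlim (eventually_nhdsWithin_of_forall fun δ hδ => by simpa using h δ hδ)
  have hk : α * r + 1 ≠ 0 := by positivity
  set u := N / (α * r * V)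
  have hu : 0 < u := by positivity
  have hNu : N = α * r * V * u := by simp only [u]; field_simp
  have hpow : ∀ e : ℝ, (u ^ (α / (α * r + 1))) ^ e = u ^ (α * e / (α * r + 1)) := fun e => by
    rw [← Real.rpow_mul hu.le]; ring_nf
  have hu_exp : α * r / (α * r + 1) = 1 + α * -(1 / α) / (α * r + 1) := by field_simp; ring
  have hV_exp : 1 / (α * r + 1) = 1 + -(α * r / (α * r + 1)) := by field_simp; ring
  calc M ≤ N * (u ^ (α / (α * r + 1))) ^ (-(1 / α)) + V * (u ^ (α / (α * r + 1))) ^ r :=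
        h _ (by positivity)
    _ = (α * r + 1) * V * u ^ (α * r / (α * r + 1)) := by
      rw [hpow, hpow, hNu, hu_exp, Real.rpow_add hu, Real.rpow_one]
      ring
    _ = _ := by
      rw [Real.div_rpow hN.le (by positivity), Real.mul_rpow (by positivity) hV.le,
        Real.mul_rpow hα.le hr.le, hV_exp, Real.rpow_add hV, Real.rpow_one, Real.rpow_neg hV.le]
      field_simp

theorem landau_sup_norm_of_variation_bound_Lalpha_general
    (J : Set ℝ) (hJ : J.OrdConnected) (hJu : ¬ Bornology.IsBounded J)
    (g' : ℝ → ℝ) (α : ℝ) (hα : 1 < α)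
    (hg'α : MemLp g' (ENNReal.ofReal α) (volume.restrict J))
    (V r : ℝ) (hV : 0 < V) (hr : r ∈ Ioc (0 : ℝ) 1)
    (hvar : ∀ a ∈ J, ∀ b ∈ J,
      eVariationOn g' (uIcc a b) ≤ ENNReal.ofReal (V * |b - a| ^ r)) :
    MemLp g' ⊤ (volume.restrict J) ∧
      (eLpNorm g' ⊤ (volume.restrict J)).toReal ≤
        (α * r + 1) / (α ^ (α * r / (α * r + 1)) * r ^ (α * r / (α * r + 1))) *
          (eLpNorm g' (ENNReal.ofReal α) (volume.restrict J)).toReal ^ (α * r / (α * r + 1)) *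
            V ^ (1 / (α * r + 1)) := by
  have hα0 : 0 < α := by linarith
  have hr0 : 0 < r := hr.1
  have hhol : ∀ x ∈ J, ∀ t ∈ J, ‖g' x - g' t‖ ≤ V * |t - x| ^ r := fun x hx t ht => by
    rw [← dist_eq_norm]
    exact dist_le_of_eVariationOn_le left_mem_uIcc right_mem_uIcc (by positivity) (hvar x hx t ht)
  have hbound : ∀ x ∈ J, ‖g' x‖ ≤ _ := fun x hx =>
    le_of_forall_pos_le_mul_rpow_neg_add_mul_rpow hα0 hr0 hV ENNReal.toReal_nonneg fun δ hδ => by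
      obtain ⟨a, hxa, haJ⟩ := hJ.exists_Icc_subset_of_not_isBounded hJu hx hδ.le
      exact norm_le_eLpNorm_mul_rpow_add_of_holder_on_Icc hα0 hV.le hr0.le hδ hg'α haJ hxa
        fun t ht => hhol x hx t (haJ ht)
  have hae : ∀ᵐ x ∂volume.restrict J, ‖g' x‖ ≤ _ :=
    ae_restrict_of_forall_mem hJ.measurableSet hbound
  refine ⟨memLp_top_of_bound hg'α.aestronglyMeasurable _ hae, ?_⟩
  rw [eLpNorm_exponent_top]
  exact ENNReal.toReal_le_of_le_ofReal (by positivity) (eLpNormEssSup_le_of_ae_bound hae)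

/-- **Theorem 5.** Let `J` be an unbounded interval of `ℝ` and `g : J → ℝ` locally absolutely
continuous with derivative `g'`. If `g' ∈ L^α(J)` for some `α > 1`, `g'` is of locally bounded
variation and its variation on any subinterval with endpoints `a, b ∈ J` is `≤ V |b-a|^r` with
`V > 0`, `r ∈ (0,1]`, then `g' ∈ L^∞(J)` and
`‖g'‖_{J,∞} ≤ ((αr+1)/(α^{αr/(αr+1)} r^{αr/(αr+1)})) ‖g'‖_{J,α}^{αr/(αr+1)} V^{1/(αr+1)}`. -/
theorem landau_sup_norm_of_variation_bound_Lalpha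
    (J : Set ℝ) (hJ : J.OrdConnected) (hJu : ¬ Bornology.IsBounded J)
    (g g' : ℝ → ℝ) (α : ℝ) (hα : 1 < α)
    (hderiv : ∀ x ∈ J, HasDerivWithinAt g (g' x) J x)
    (hg'α : MemLp g' (ENNReal.ofReal α) (volume.restrict J))
    (hbv : ∀ a ∈ J, ∀ b ∈ J, BoundedVariationOn g' (uIcc a b))
    (V r : ℝ) (hV : 0 < V) (hr : r ∈ Ioc (0 : ℝ) 1)
    (hvar : ∀ a ∈ J, ∀ b ∈ J,
      eVariationOn g' (uIcc a b) ≤ ENNReal.ofReal (V * |b - a| ^ r)) :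
    MemLp g' ⊤ (volume.restrict J) ∧
      (eLpNorm g' ⊤ (volume.restrict J)).toReal ≤
        (α * r + 1) / (α ^ (α * r / (α * r + 1)) * r ^ (α * r / (α * r + 1))) *
          (eLpNorm g' (ENNReal.ofReal α) (volume.restrict J)).toReal ^ (α * r / (α * r + 1)) *
            V ^ (1 / (α * r + 1)) :=
  landau_sup_norm_of_variation_bound_Lalpha_general J hJ hJu g' α hα hg'α V r hV hr hvar
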